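/- arXiv:2003.03884 — 2 statements merged into one kernel-verified Lean document; each statement's English description precedes it below -/
import Mathlib

section
/- The derivative of a finite Blaschke product of degree n ≥ 2 has exactly n - 1 zeros (counted with multiplicity) in the open unit disk. -/
open Polynomial Finset


lemma natDeg_lin₂ (w : ℂ) : (1 - C w * X : ℂ[X]).natDegree ≤ 1 := by
  refine le_trans (natDegree_sub_le _ _) ?_
  refine max_le (by simp) (le_trans natDegree_mul_le (by simp))

lemma natDeg_prod_lin₁ {ι : Type*} (s : Finset ι) (b : ι → ℂ) :
    (∏ j ∈ s, (X - C (b j))).natDegree ≤ s.card := by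
  refine le_trans (natDegree_prod_le s fun j => X - C (b j)) (le_trans (Finset.sum_le_sum fun j _ => (natDegree_X_sub_C (b j)).le) (by simp))

lemma natDeg_prod_lin₂ {ι : Type*} (s : Finset ι) (b : ι → ℂ) :
    (∏ j ∈ s, (1 - C (b j) * X)).natDegree ≤ s.card := by
  refine le_trans (natDegree_prod_le s fun j => 1 - C (b j) * X) (le_trans (Finset.sum_le_sum fun j _ => natDeg_lin₂ (b j)) (by simp))


lemma my_eval_reflect (p : ℂ[X]) {N : ℕ} (h : p.natDegree ≤ N) {z : ℂ} (hz : z ≠ 0) :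
    eval z (reflect N p) = z ^ N * eval z⁻¹ p := by
  have : Invertible z⁻¹ := invertibleOfNonzero (inv_ne_zero hz)
  have h2 := eval₂_reflect_mul_pow (RingHom.id ℂ) z⁻¹ N p h
  rw [invOf_eq_inv, inv_inv] at h2
  have h3 : eval z (reflect N p) * (z⁻¹) ^ N = eval z⁻¹ p := h2
  field_simp at h3
  rw [one_div] at h3; rw [← h3, mul_comm (eval z _), ← mul_assoc, ← mul_pow, mul_inv_cancel₀ hz, one_pow, one_mul]

lemma my_reflect_one_lin₁ (w : ℂ) : reflect 1 (X - C w) = 1 - C w * X := by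
  have h : (X - C w : ℂ[X]) = X + C (-w) := by rw [map_neg]; ring
  rw [h, reflect_add, reflect_one_X, reflect_C, map_neg]
  ring

lemma my_reflect_pow_lin (w : ℂ) (m : ℕ) :
    reflect m ((X - C w) ^ m) = (1 - C w * X) ^ m := by
  induction m with
  | zero => simp [reflect_one]
  | succ m ih =>
      have hd : ((X - C w : ℂ[X]) ^ m).natDegree ≤ m := by
        refine le_trans natDegree_pow_le (by simp [natDegree_X_sub_C])
      rw [pow_succ, pow_succ, show m + 1 = m + 1 from rfl]
      rw [reflect_mul _ _ hd (natDegree_X_sub_C w).le, ih, my_reflect_one_lin₁]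

lemma my_natDegree_reflect {p : ℂ[X]} (hp : p ≠ 0) {N : ℕ} (h : p.natDegree ≤ N) :
    (reflect N p).natDegree = N - p.natTrailingDegree := by
  have ht : p.natTrailingDegree ≤ N := le_trans p.natTrailingDegree_le_natDegree h
  refine le_antisymm ?_ ?_
  · refine natDegree_le_iff_coeff_eq_zero.mpr fun j hj => ?_
    rw [coeff_reflect]
    by_cases hjN : j ≤ N
    · rw [revAt_le hjN]
      exact coeff_eq_zero_of_lt_natTrailingDegree (by omega)
    · rw [revAt_eq_self_of_lt (by omega)]
      exact coeff_eq_zero_of_natDegree_lt (by omega)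
  · refine le_natDegree_of_ne_zero ?_
    rw [coeff_reflect, revAt_le (by omega : N - p.natTrailingDegree ≤ N),
      show N - (N - p.natTrailingDegree) = p.natTrailingDegree by omega]
    exact mt trailingCoeff_eq_zero.mp hp

lemma my_rootMult_reflect {p : ℂ[X]} (hp : p ≠ 0) {N : ℕ} (h : p.natDegree ≤ N) {z : ℂ}
    (hz : z ≠ 0) :
    rootMultiplicity z (reflect N p) = rootMultiplicity z⁻¹ p := by
  set m := rootMultiplicity z⁻¹ p with hm
  set q := p /ₘ (X - C z⁻¹) ^ m with hqdef
  have hfac : (X - C z⁻¹) ^ m * q = p := pow_mul_divByMonic_rootMultiplicity_eq p z⁻¹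
  have hq0 : eval z⁻¹ q ≠ 0 := eval_divByMonic_pow_rootMultiplicity_ne_zero z⁻¹ hp
  have hqne : q ≠ 0 := fun hh => hq0 (by simp [hh])
  have hdq : m + q.natDegree = p.natDegree := by
    rw [← hfac, natDegree_mul (pow_ne_zero _ (X_sub_C_ne_zero z⁻¹)) hqne, natDegree_pow,
      natDegree_X_sub_C, mul_one]
  have hmN : m ≤ N := le_trans (by omega) h
  have hqd : q.natDegree ≤ N - m := by omega
  have hrm : reflect N p = (1 - C z⁻¹ * X) ^ m * reflect (N - m) q := by
    rw [← hfac, show N = m + (N - m) by omega,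
      reflect_mul _ _ (le_trans natDegree_pow_le (by simp [natDegree_X_sub_C])) hqd,
      my_reflect_pow_lin, show m + (N - m) - m = N - m by omega]
  have hkey : (1 - C z⁻¹ * X : ℂ[X]) = C (-z⁻¹) * (X - C z) := by
    rw [map_neg, neg_mul, mul_sub, ← C_mul, inv_mul_cancel₀ hz, map_one]; ring
  have hrefq : eval z (reflect (N - m) q) ≠ 0 := by
    rw [my_eval_reflect q hqd hz]
    exact mul_ne_zero (pow_ne_zero _ hz) hq0
  have hrefqne : reflect (N - m) q ≠ 0 := fun hh => hrefq (by simp [hh])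
  rw [hrm, hkey, mul_pow, mul_assoc,
    rootMultiplicity_mul (by
      refine mul_ne_zero (pow_ne_zero _ ?_) (mul_ne_zero (pow_ne_zero _ (X_sub_C_ne_zero z)) hrefqne)
      simpa using hz),
    rootMultiplicity_mul (mul_ne_zero (pow_ne_zero _ (X_sub_C_ne_zero z)) hrefqne),
    rootMultiplicity_X_sub_C_pow,
    rootMultiplicity_eq_zero (by simp [IsRoot, hz] : ¬ IsRoot ((C (-z⁻¹)) ^ m) z),
    rootMultiplicity_eq_zero (by simpa [IsRoot] using hrefq)]
  omega

lemma my_reflect_sum {ι : Type*} (N : ℕ) (s : Finset ι) (f : ι → ℂ[X]) :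
    reflect N (∑ i ∈ s, f i) = ∑ i ∈ s, reflect N (f i) := by
  classical
  induction s using Finset.induction with
  | empty => simp [reflect_zero]
  | insert _ _ h ih => rw [Finset.sum_insert h, Finset.sum_insert h, reflect_add, ih]

lemma my_reflect_one_lin₂ (w : ℂ) : reflect 1 (1 - C w * X) = X - C w := by
  have h : (1 - C w * X : ℂ[X]) = C (-w) * X ^ 1 + 1 := by rw [map_neg]; ring
  rw [h, reflect_add, reflect_C_mul_X_pow, reflect_one, map_neg]
  norm_num
  ring

lemma my_reflect_prod₁ {ι : Type*} (s : Finset ι) (b : ι → ℂ) :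
    reflect s.card (∏ j ∈ s, (X - C (b j))) = ∏ j ∈ s, (1 - C (b j) * X) := by
  classical
  induction s using Finset.induction with
  | empty => simp [reflect_one]
  | @insert a s h ih =>
      rw [Finset.prod_insert h, Finset.prod_insert h, Finset.card_insert_of_notMem h,
        show s.card + 1 = 1 + s.card by ring,
        reflect_mul _ _ (natDegree_X_sub_C (b a)).le (natDeg_prod_lin₁ s b),
        my_reflect_one_lin₁, ih]

lemma my_reflect_prod₂ {ι : Type*} (s : Finset ι) (b : ι → ℂ) :
    reflect s.card (∏ j ∈ s, (1 - C (b j) * X)) = ∏ j ∈ s, (X - C (b j)) := by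
  classical
  induction s using Finset.induction with
  | empty => simp [reflect_one]
  | @insert a s h ih =>
      rw [Finset.prod_insert h, Finset.prod_insert h, Finset.card_insert_of_notMem h,
        show s.card + 1 = 1 + s.card by ring,
        reflect_mul _ _ (natDeg_lin₂ (b a)) (natDeg_prod_lin₂ s b),
        my_reflect_one_lin₂, ih]


lemma my_derivative_prod {ι : Type*} [DecidableEq ι] (s : Finset ι) (f : ι → ℂ[X]) :
    derivative (∏ i ∈ s, f i) = ∑ i ∈ s, (∏ j ∈ s.erase i, f j) * derivative (f i) := by
  induction s using Finset.induction with
  | empty => simp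
  | @insert a s h ih =>
      rw [Finset.prod_insert h, derivative_mul, ih, Finset.sum_insert h, Finset.mul_sum,
        Finset.erase_insert h]
      congr 1
      · ring
      refine Finset.sum_congr rfl fun i hi => ?_
      rw [Finset.erase_insert_of_ne (by rintro rfl; exact h hi),
        Finset.prod_insert (fun hh => h (Finset.mem_of_mem_erase hh))]
      ring

lemma circle_ne_zero (n : ℕ) (hn : 1 ≤ n) (α : ℂ) (hα0 : α ≠ 0) (a : Fin n → ℂ)
    (ha : ∀ k, ‖a k‖ < 1) {z : ℂ} (hz : ‖z‖ = 1) :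
    eval z ((C α * ∏ k : Fin n, (X - C (a k))).derivative *
          (∏ k : Fin n, (1 - C ((starRingEnd ℂ) (a k)) * X)) -
        (C α * ∏ k : Fin n, (X - C (a k))) *
          (∏ k : Fin n, (1 - C ((starRingEnd ℂ) (a k)) * X)).derivative) ≠ 0 := by
  have hz0 : z ≠ 0 := by
    intro h; rw [h] at hz; simp at hz
  have hzz : z * (starRingEnd ℂ) z = 1 := by
    rw [Complex.mul_conj]
    norm_cast
    rw [Complex.normSq_eq_norm_sq, hz]; norm_num
  have hA : ∀ k, z - a k ≠ 0 := by
    intro k h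
    rw [sub_eq_zero] at h
    rw [h] at hz
    exact absurd hz (ha k).ne
  have hB : ∀ k, 1 - (starRingEnd ℂ) (a k) * z ≠ 0 := by
    intro k h
    rw [sub_eq_zero] at h
    have h2 : ‖(starRingEnd ℂ) (a k) * z‖ = ‖a k‖ := by
      simp [map_mul, hz]
    rw [← h] at h2
    simp at h2
    exact absurd h2.symm (ha k).ne
  set s : Fin n → ℝ := fun k => (1 - Complex.normSq (a k)) / Complex.normSq (z - a k) with hs
  have hnsA : ∀ k, Complex.normSq (z - a k) ≠ 0 := fun k => (Complex.normSq_pos.mpr (hA k)).ne'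
  have hspos : ∀ k, 0 < s k := by
    intro k
    apply div_pos
    · have h2 : Complex.normSq (a k) < 1 := by
        rw [Complex.normSq_eq_norm_sq]
        nlinarith [norm_nonneg (a k), ha k]
      linarith
    · exact Complex.normSq_pos.mpr (hA k)
  have hSpos : 0 < ∑ k, s k :=
    Finset.sum_pos (fun k _ => hspos k) (by
      have : Nonempty (Fin n) := ⟨⟨0, by omega⟩⟩
      exact Finset.univ_nonempty)
  -- eval expansion
  have e1 : eval z ((C α * ∏ k : Fin n, (X - C (a k))).derivative *
          (∏ k : Fin n, (1 - C ((starRingEnd ℂ) (a k)) * X)) -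
        (C α * ∏ k : Fin n, (X - C (a k))) *
          (∏ k : Fin n, (1 - C ((starRingEnd ℂ) (a k)) * X)).derivative)
      = α * ((∑ k, ∏ j ∈ Finset.univ.erase k, (z - a j)) *
            (∏ k, (1 - (starRingEnd ℂ) (a k) * z)))
        - α * ((∏ k, (z - a k)) *
            (∑ k, (∏ j ∈ Finset.univ.erase k, (1 - (starRingEnd ℂ) (a j) * z)) *
              (-(starRingEnd ℂ) (a k)))) := by
    rw [derivative_C_mul, my_derivative_prod, my_derivative_prod]
    simp [Finset.mul_sum, eval_prod, eval_finset_sum, mul_assoc]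
    rw [← Finset.mul_sum]
    ring
  -- key identity
  have key : z * eval z ((C α * ∏ k : Fin n, (X - C (a k))).derivative *
          (∏ k : Fin n, (1 - C ((starRingEnd ℂ) (a k)) * X)) -
        (C α * ∏ k : Fin n, (X - C (a k))) *
          (∏ k : Fin n, (1 - C ((starRingEnd ℂ) (a k)) * X)).derivative)
      = α * (∏ k, (z - a k)) * (∏ k, (1 - (starRingEnd ℂ) (a k) * z)) * ((∑ k, s k : ℝ) : ℂ) := by
    rw [e1]
    push_cast
    rw [mul_sub]
    simp only [Finset.mul_sum, Finset.sum_mul]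
    rw [← Finset.sum_sub_distrib]
    refine Finset.sum_congr rfl fun k _ => ?_
    have hPA : (∏ j, (z - a j)) = (z - a k) * ∏ j ∈ Finset.univ.erase k, (z - a j) :=
      (Finset.mul_prod_erase _ _ (Finset.mem_univ k)).symm
    have hPB : (∏ j, (1 - (starRingEnd ℂ) (a j) * z))
        = (1 - (starRingEnd ℂ) (a k) * z) *
          ∏ j ∈ Finset.univ.erase k, (1 - (starRingEnd ℂ) (a j) * z) :=
      (Finset.mul_prod_erase _ _ (Finset.mem_univ k)).symm
    rw [hPA, hPB]
    have hnsa : ((Complex.normSq (a k) : ℝ) : ℂ) = (starRingEnd ℂ) (a k) * a k := by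
      rw [mul_comm, Complex.mul_conj]
    have h1 : (1 : ℂ) - (starRingEnd ℂ) (a k) * z = z * (starRingEnd ℂ) (z - a k) := by
      rw [map_sub]; linear_combination -hzz
    have h2 : ((Complex.normSq (z - a k) : ℝ) : ℂ) * ((s k : ℝ) : ℂ)
        = 1 - ((Complex.normSq (a k) : ℝ) : ℂ) := by
      rw [hs]
      push_cast
      rw [mul_div_cancel₀ _ (show ((Complex.normSq (z - a k) : ℝ) : ℂ) ≠ 0 from by
        exact_mod_cast hnsA k)]
    have hterm : (z - a k) * ((1 - (starRingEnd ℂ) (a k) * z) * ((s k : ℝ) : ℂ))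
        = z * (1 - ((Complex.normSq (a k) : ℝ) : ℂ)) := by
      rw [h1, show (z - a k) * (z * (starRingEnd ℂ) (z - a k) * ((s k : ℝ) : ℂ))
          = z * ((z - a k) * (starRingEnd ℂ) (z - a k) * ((s k : ℝ) : ℂ)) from by ring,
        Complex.mul_conj]
      rw [h2]
    set eA := ∏ j ∈ Finset.univ.erase k, (z - a j) with heA
    set eB := ∏ j ∈ Finset.univ.erase k, (1 - (starRingEnd ℂ) (a j) * z) with heB
    linear_combination (-(α * eA * eB)) * hterm + (α * eA * eB * z) * hnsa
  have hfac_ne : α * (∏ k, (z - a k)) * (∏ k, (1 - (starRingEnd ℂ) (a k) * z))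
      * ((∑ k, s k : ℝ) : ℂ) ≠ 0 := by
    refine mul_ne_zero (mul_ne_zero (mul_ne_zero hα0 ?_) ?_) ?_
    · exact Finset.prod_ne_zero_iff.mpr fun k _ => hA k
    · exact Finset.prod_ne_zero_iff.mpr fun k _ => hB k
    · exact_mod_cast hSpos.ne'
  intro h
  rw [h, mul_zero] at key
  exact hfac_ne key.symm

lemma reflect_W (n : ℕ) (hn : 2 ≤ n) (α : ℂ) (hα : ‖α‖ = 1) (a : Fin n → ℂ) :
    reflect (2 * n - 1) (Polynomial.map (starRingEnd ℂ)
        ((C α * ∏ k : Fin n, (X - C (a k))).derivative *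
            (∏ k : Fin n, (1 - C ((starRingEnd ℂ) (a k)) * X)) -
          (C α * ∏ k : Fin n, (X - C (a k))) *
            (∏ k : Fin n, (1 - C ((starRingEnd ℂ) (a k)) * X)).derivative))
      = C (((starRingEnd ℂ) α) ^ 2) *
          (X * ((C α * ∏ k : Fin n, (X - C (a k))).derivative *
            (∏ k : Fin n, (1 - C ((starRingEnd ℂ) (a k)) * X)) -
          (C α * ∏ k : Fin n, (X - C (a k))) *
            (∏ k : Fin n, (1 - C ((starRingEnd ℂ) (a k)) * X)).derivative)) := by
  have hαα : α * (starRingEnd ℂ) α = 1 := by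
    rw [Complex.mul_conj]
    norm_cast
    rw [Complex.normSq_eq_norm_sq, hα]; norm_num
  have hcardE : ∀ k : Fin n, (Finset.univ.erase k).card = n - 1 := by
    intro k
    rw [Finset.card_erase_of_mem (Finset.mem_univ k), Finset.card_univ, Fintype.card_fin]
  have hcardU : (Finset.univ : Finset (Fin n)).card = n := by
    rw [Finset.card_univ, Fintype.card_fin]
  set P₀ : ℂ[X] := ∏ k : Fin n, (X - C (a k)) with hP₀
  set Q : ℂ[X] := ∏ k : Fin n, (1 - C ((starRingEnd ℂ) (a k)) * X) with hQ
  set U : ℂ[X] := ∏ k : Fin n, (X - C ((starRingEnd ℂ) (a k))) with hU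
  set V : ℂ[X] := ∏ k : Fin n, (1 - C (a k) * X) with hV
  -- map conj of W
  have hmap : Polynomial.map (starRingEnd ℂ)
      ((C α * P₀).derivative * Q - (C α * P₀) * Q.derivative)
      = C ((starRingEnd ℂ) α) * (U.derivative * V - U * V.derivative) := by
    rw [Polynomial.map_sub, Polynomial.map_mul, Polynomial.map_mul, ← derivative_map,
      ← derivative_map, Polynomial.map_mul, Polynomial.map_C, hP₀, hQ,
      Polynomial.map_prod, Polynomial.map_prod]
    have e1 : ∀ k : Fin n, Polynomial.map (starRingEnd ℂ) (X - C (a k))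
        = X - C ((starRingEnd ℂ) (a k)) := by
      intro k; rw [Polynomial.map_sub, map_X, map_C]
    have e2 : ∀ k : Fin n, Polynomial.map (starRingEnd ℂ) (1 - C ((starRingEnd ℂ) (a k)) * X)
        = 1 - C (a k) * X := by
      intro k
      rw [Polynomial.map_sub, Polynomial.map_one, Polynomial.map_mul, map_X, map_C,
        Complex.conj_conj]
    simp only [e1, e2]
    rw [derivative_C_mul, ← hU, ← hV]
    ring
  rw [hmap]
  -- expand as sums
  have hUV : U.derivative * V - U * V.derivative
      = ∑ k : Fin n, ((∏ j ∈ Finset.univ.erase k, (X - C ((starRingEnd ℂ) (a j)))) * V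
          + C (a k) * (U * ∏ j ∈ Finset.univ.erase k, (1 - C (a j) * X))) := by
    rw [hU, hV, my_derivative_prod, my_derivative_prod, ← hU, ← hV]
    rw [Finset.sum_mul, Finset.mul_sum, ← Finset.sum_sub_distrib]
    refine Finset.sum_congr rfl fun k _ => ?_
    have d1 : (X - C ((starRingEnd ℂ) (a k))).derivative = 1 := by simp
    have d2 : (1 - C (a k) * X).derivative = -C (a k) := by simp
    rw [d1, d2]
    ring
  have hPQ : (C α * P₀).derivative * Q - (C α * P₀) * Q.derivative
      = C α * ∑ k : Fin n, ((∏ j ∈ Finset.univ.erase k, (X - C (a j))) * Q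
          + C ((starRingEnd ℂ) (a k)) *
            (P₀ * ∏ j ∈ Finset.univ.erase k, (1 - C ((starRingEnd ℂ) (a j)) * X))) := by
    rw [derivative_C_mul, hP₀, hQ, my_derivative_prod, my_derivative_prod, ← hP₀, ← hQ]
    rw [Finset.mul_sum]
    rw [Finset.sum_mul, Finset.mul_sum, Finset.mul_sum]
    rw [← Finset.sum_sub_distrib]
    refine Finset.sum_congr rfl fun k _ => ?_
    have d1 : (X - C (a k)).derivative = 1 := by simp
    have d2 : (1 - C ((starRingEnd ℂ) (a k)) * X).derivative = -C ((starRingEnd ℂ) (a k)) := by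
      simp
    rw [d1, d2]
    ring
  rw [hUV, hPQ, reflect_C_mul, my_reflect_sum]
  have hperk : ∀ k : Fin n,
      reflect (2 * n - 1) ((∏ j ∈ Finset.univ.erase k, (X - C ((starRingEnd ℂ) (a j)))) * V
          + C (a k) * (U * ∏ j ∈ Finset.univ.erase k, (1 - C (a j) * X)))
      = X * ((∏ j ∈ Finset.univ.erase k, (X - C (a j))) * Q
          + C ((starRingEnd ℂ) (a k)) *
            (P₀ * ∏ j ∈ Finset.univ.erase k, (1 - C ((starRingEnd ℂ) (a j)) * X))) := by
    intro k
    rw [reflect_add, reflect_C_mul]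
    rw [show 2 * n - 1 = (n - 1) + n by omega]
    rw [reflect_mul _ _ (le_trans (natDeg_prod_lin₁ _ _) (hcardE k).le) (le_trans (natDeg_prod_lin₂ _ _) hcardU.le)]
    rw [show (n - 1) + n = n + (n - 1) by omega]
    rw [reflect_mul _ _ (le_trans (natDeg_prod_lin₁ _ _) hcardU.le) (le_trans (natDeg_prod_lin₂ _ _) (hcardE k).le)]
    rw [show n - 1 = (Finset.univ.erase k).card from (hcardE k).symm]
    have r1 := my_reflect_prod₁ (Finset.univ.erase k) (fun j => (starRingEnd ℂ) (a j))
    have r2 := my_reflect_prod₂ (Finset.univ : Finset (Fin n)) a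
    have r3 := my_reflect_prod₁ (Finset.univ : Finset (Fin n)) (fun j => (starRingEnd ℂ) (a j))
    have r4 := my_reflect_prod₂ (Finset.univ.erase k) a
    rw [hcardU] at r2 r3
    rw [r1, r2, r3, r4]
    rw [← hP₀, ← hQ]
    -- now a ring identity using mul_prod_erase
    have hPA : P₀ = (X - C (a k)) * ∏ j ∈ Finset.univ.erase k, (X - C (a j)) := by
      rw [hP₀]; exact (Finset.mul_prod_erase _ _ (Finset.mem_univ k)).symm
    have hQB : Q = (1 - C ((starRingEnd ℂ) (a k)) * X) *
        ∏ j ∈ Finset.univ.erase k, (1 - C ((starRingEnd ℂ) (a j)) * X) := by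
      rw [hQ]; exact (Finset.mul_prod_erase _ _ (Finset.mem_univ k)).symm
    rw [hPA, hQB]
    ring
  rw [Finset.sum_congr rfl fun k _ => hperk k]
  rw [← Finset.mul_sum]
  have hC : C ((starRingEnd ℂ) α ^ 2) * C α = C ((starRingEnd ℂ) α) := by
    rw [← C_mul]
    congr 1
    linear_combination ((starRingEnd ℂ) α) * hαα
  linear_combination (-(X * ∑ k : Fin n,
      ((∏ j ∈ Finset.univ.erase k, (X - C (a j))) * Q +
        C ((starRingEnd ℂ) (a k)) *
          (P₀ * ∏ j ∈ Finset.univ.erase k, (1 - C ((starRingEnd ℂ) (a j)) * X))))) * hC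

/-- The derivative of a finite Blaschke product of degree `n ≥ 2` has exactly `n - 1`
zeros (with multiplicity) in the open unit disk: writing `f = num/den` with
`num = α ∏ (X - z_k)` and `den = ∏ (1 - conj(z_k) X)`, the numerator
`num' · den - num · den'` of `f'` has exactly `n - 1` roots in the open unit disk. -/
theorem blaschke_deriv_zeros (n : ℕ) (hn : 2 ≤ n) (α : ℂ) (hα : ‖α‖ = 1)
    (a : Fin n → ℂ) (ha : ∀ k, ‖a k‖ < 1) :
    ((((C α * ∏ k : Fin n, (X - C (a k))).derivative *
          (∏ k : Fin n, (1 - C ((starRingEnd ℂ) (a k)) * X)) -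
        (C α * ∏ k : Fin n, (X - C (a k))) *
          (∏ k : Fin n, (1 - C ((starRingEnd ℂ) (a k)) * X)).derivative).roots).filter
      (fun z => ‖z‖ < 1)).card = n - 1 := by
  classical
  have hα0 : α ≠ 0 := by
    intro h; rw [h] at hα; simp at hα
  set W : ℂ[X] := (C α * ∏ k : Fin n, (X - C (a k))).derivative *
          (∏ k : Fin n, (1 - C ((starRingEnd ℂ) (a k)) * X)) -
        (C α * ∏ k : Fin n, (X - C (a k))) *
          (∏ k : Fin n, (1 - C ((starRingEnd ℂ) (a k)) * X)).derivative with hW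
  have hcirc : ∀ z : ℂ, ‖z‖ = 1 → eval z W ≠ 0 := fun z hz =>
    circle_ne_zero n (by omega) α hα0 a ha hz
  have hWne : W ≠ 0 := by
    intro h
    exact hcirc 1 (by simp) (by rw [h, eval_zero])
  -- degree bound
  have hWdeg : W.natDegree ≤ 2 * n - 1 := by
    have hP : (C α * ∏ k : Fin n, (X - C (a k))).natDegree ≤ n := by
      refine le_trans (natDegree_mul_le) ?_
      have := natDeg_prod_lin₁ (Finset.univ : Finset (Fin n)) a
      simp only [natDegree_C, zero_add]
      simpa using this
    have hQ : (∏ k : Fin n, (1 - C ((starRingEnd ℂ) (a k)) * X)).natDegree ≤ n := by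
      have := natDeg_prod_lin₂ (Finset.univ : Finset (Fin n)) (fun k => (starRingEnd ℂ) (a k))
      simpa using this
    have h1 : (C α * ∏ k : Fin n, (X - C (a k))).derivative.natDegree ≤ n - 1 :=
      le_trans (natDegree_derivative_le _) (by omega)
    have h2 : (∏ k : Fin n, (1 - C ((starRingEnd ℂ) (a k)) * X)).derivative.natDegree ≤ n - 1 :=
      le_trans (natDegree_derivative_le _) (by omega)
    refine le_trans (natDegree_sub_le _ _) (max_le ?_ ?_)
    · exact le_trans natDegree_mul_le (by omega)
    · exact le_trans natDegree_mul_le (by omega)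
  set Wc : ℂ[X] := W.map (starRingEnd ℂ) with hWc
  have hWcne : Wc ≠ 0 := Polynomial.map_ne_zero hWne
  have hWcdeg : Wc.natDegree ≤ 2 * n - 1 := le_trans natDegree_map_le hWdeg
  have hE : reflect (2 * n - 1) Wc = C (((starRingEnd ℂ) α) ^ 2) * (X * W) :=
    reflect_W n hn α hα a
  have hCne : (C (((starRingEnd ℂ) α) ^ 2) : ℂ[X]) ≠ 0 := by
    simp only [ne_eq, C_eq_zero, pow_eq_zero_iff]
    simp [hα0]
  have hXWne : (X * W : ℂ[X]) ≠ 0 := mul_ne_zero X_ne_zero hWne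
  set R := W.roots with hR
  have hRoots_c : Wc.roots = R.map (starRingEnd ℂ) := by
    rw [hWc, hR]
    exact (IsAlgClosed.splits W).roots_map _
  -- symmetry of root multiplicities
  have hsym : ∀ z : ℂ, z ≠ 0 → R.count z = R.count (((starRingEnd ℂ) z)⁻¹) := by
    intro z hz
    have h1 := my_rootMult_reflect hWcne hWcdeg hz
    rw [hE, rootMultiplicity_mul (mul_ne_zero hCne hXWne),
      rootMultiplicity_mul hXWne,
      rootMultiplicity_eq_zero (p := C (((starRingEnd ℂ) α) ^ 2)) (by
        simp [IsRoot, hα0]),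
      rootMultiplicity_eq_zero (p := (X : ℂ[X])) (by simp [IsRoot, hz])] at h1
    simp only [zero_add] at h1
    have h2 : rootMultiplicity z⁻¹ Wc = R.count (((starRingEnd ℂ) z)⁻¹) := by
      rw [← count_roots, hRoots_c]
      have h3 := Multiset.count_map_eq_count' (starRingEnd ℂ) R
        (RingHom.injective _) (((starRingEnd ℂ) z)⁻¹)
      rw [map_inv₀, Complex.conj_conj] at h3
      exact h3
    rw [h2] at h1
    have h4 : R.count z = rootMultiplicity z W := by rw [hR]; exact count_roots W
    rw [h4, h1]
  -- trailing degree & count of 0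
  have hr0c : Wc.natTrailingDegree = R.count 0 := by
    rw [← rootMultiplicity_eq_natTrailingDegree', ← count_roots, hRoots_c]
    have h3 := Multiset.count_map_eq_count' (starRingEnd ℂ) R (RingHom.injective _) 0
    rw [map_zero] at h3
    exact h3
  -- degree equation
  have hdeq : W.natDegree + 1 + R.count 0 = 2 * n - 1 := by
    have hnd := my_natDegree_reflect hWcne hWcdeg
    rw [hE, natDegree_mul hCne hXWne, natDegree_mul X_ne_zero hWne, natDegree_C,
      natDegree_X, hr0c] at hnd
    have hle : R.count 0 ≤ Wc.natDegree := by
      rw [← hr0c]; exact natTrailingDegree_le_natDegree _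
    omega
  have hcard : Multiset.card R = W.natDegree := splits_iff_card_roots.mp
    (IsAlgClosed.splits W)
  -- counting
  have hsplit : (R.filter (fun z => ‖z‖ < 1)).card
      + (R.filter (fun z => 1 < ‖z‖)).card = Multiset.card R := by
    have h4 := Multiset.filter_add_not (fun z => ‖z‖ < 1) R
    have h5 : R.filter (fun z => ¬ ‖z‖ < 1) = R.filter (fun z => 1 < ‖z‖) := by
      refine Multiset.filter_congr fun z hz => ?_
      have h6 : ‖z‖ ≠ 1 := fun h7 => hcirc z h7 (isRoot_of_mem_roots hz)
      constructor
      · intro h8; push_neg at h8; exact lt_of_le_of_ne h8 (Ne.symm h6)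
      · intro h8; push_neg; exact le_of_lt h8
    rw [h5] at h4
    calc (R.filter (fun z => ‖z‖ < 1)).card
          + (R.filter (fun z => 1 < ‖z‖)).card
        = Multiset.card ((R.filter (fun z => ‖z‖ < 1))
            + (R.filter (fun z => 1 < ‖z‖))) := (Multiset.card_add _ _).symm
      _ = Multiset.card R := by rw [h4]
  -- the involution map
  have hinv : ∀ w : ℂ, ((starRingEnd ℂ) (((starRingEnd ℂ) w)⁻¹))⁻¹ = w := by
    intro w; rw [map_inv₀, Complex.conj_conj, inv_inv]
  have hinj : Function.Injective (fun z : ℂ => ((starRingEnd ℂ) z)⁻¹) := by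
    intro x y h
    have := congrArg (fun w : ℂ => ((starRingEnd ℂ) w)⁻¹) h
    simpa [hinv] using this
  have hmapeq : (R.filter (fun z => 1 < ‖z‖)).map (fun z => ((starRingEnd ℂ) z)⁻¹)
      = R.filter (fun z => ‖z‖ < 1 ∧ z ≠ 0) := by
    refine Multiset.ext.mpr fun w => ?_
    have hcnt : ((R.filter (fun z => 1 < ‖z‖)).map
        (fun z => ((starRingEnd ℂ) z)⁻¹)).count w
        = (R.filter (fun z => 1 < ‖z‖)).count (((starRingEnd ℂ) w)⁻¹) := by
      conv_lhs => rw [show w = ((starRingEnd ℂ) (((starRingEnd ℂ) w)⁻¹))⁻¹ from (hinv w).symm]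
      exact Multiset.count_map_eq_count' _ _ hinj _
    rw [hcnt, Multiset.count_filter, Multiset.count_filter]
    by_cases hw : w = 0
    · rw [hw]
      simp
    · have hphi : ((starRingEnd ℂ) w)⁻¹ ≠ 0 := by
        simp [hw]
      have habs : ‖((starRingEnd ℂ) w)⁻¹‖ = (‖w‖)⁻¹ := by
        rw [norm_inv, Complex.norm_conj]
      have habspos : 0 < ‖w‖ := by
        simpa [norm_pos_iff] using hw
      have hiff : (1 < ‖((starRingEnd ℂ) w)⁻¹‖) ↔ (‖w‖ < 1) := by
        rw [habs, one_lt_inv_iff₀]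
        simp [habspos]
      by_cases hlt : ‖w‖ < 1
      · rw [if_pos (hiff.mpr hlt), if_pos ⟨hlt, hw⟩, ← hsym w hw]
      · rw [if_neg (fun hcon => hlt (hiff.mp hcon)), if_neg (fun hcon => hlt hcon.1)]
  have h2' : (R.filter (fun z => 1 < ‖z‖)).card
      = (R.filter (fun z => ‖z‖ < 1 ∧ z ≠ 0)).card := by
    rw [← hmapeq, Multiset.card_map]
  have h3 : (R.filter (fun z => ‖z‖ < 1)).card
      = R.count 0 + (R.filter (fun z => ‖z‖ < 1 ∧ z ≠ 0)).card := by
    have hsplit2 := Multiset.filter_add_not (fun z : ℂ => z = 0)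
      (R.filter (fun z => ‖z‖ < 1))
    have hc := congrArg Multiset.card hsplit2
    rw [Multiset.card_add] at hc
    simp only [Multiset.filter_filter] at hc
    have e1 : R.filter (fun z => z = 0 ∧ ‖z‖ < 1) = R.filter (fun z => z = 0) := by
      refine Multiset.filter_congr fun z _ => ?_
      constructor
      · rintro ⟨h, -⟩; exact h
      · rintro rfl; exact ⟨rfl, by simp⟩
    have e2 : (R.filter (fun z => z = 0)).card = R.count 0 := by
      rw [Multiset.count_eq_card_filter_eq]
      congr 1
      refine Multiset.filter_congr fun z _ => ?_
      exact eq_comm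
    have e3 : R.filter (fun z => ¬ z = 0 ∧ ‖z‖ < 1)
        = R.filter (fun z => ‖z‖ < 1 ∧ z ≠ 0) := by
      refine Multiset.filter_congr fun z _ => ?_
      exact and_comm
    rw [e1, e2, e3] at hc
    omega
  omega
end

section
/- Let f be a finite Blaschke product of degree n ≥ 2 with all critical values in the closed disk {|w| ≤ λ}, 0 < λ < 1. Then for ρ with λ < ρ < 1, the preimage f^{-1}({ρ < |w| < 1}) ∩ U is a connected open set (an annular domain). -/
open Complex Finset

lemma normSq_key (a z : ℂ) :
    Complex.normSq (1 - (starRingEnd ℂ) a * z) - Complex.normSq (z - a)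
      = (1 - Complex.normSq a) * (1 - Complex.normSq z) := by
  simp [Complex.normSq_apply, Complex.mul_re, Complex.mul_im, Complex.sub_re, Complex.sub_im,
    Complex.conj_re, Complex.conj_im, Complex.one_re, Complex.one_im]
  ring

lemma denom_ne {a z : ℂ} (ha : ‖a‖ < 1) (hz : ‖z‖ ≤ 1) :
    1 - (starRingEnd ℂ) a * z ≠ 0 := by
  intro h
  have h1 : (starRingEnd ℂ) a * z = 1 := by linear_combination -h
  have : ‖(starRingEnd ℂ) a * z‖ < 1 := by
    rw [norm_mul, Complex.norm_conj]
    calc ‖a‖ * ‖z‖ ≤ ‖a‖ * 1 := by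
          exact mul_le_mul_of_nonneg_left hz (norm_nonneg a)
      _ < 1 := by simpa using ha
  rw [h1] at this; simp at this

lemma factor_lt {a z : ℂ} (ha : ‖a‖ < 1) (hz : ‖z‖ < 1) :
    ‖(z - a) / (1 - (starRingEnd ℂ) a * z)‖ < 1 := by
  have hd := denom_ne ha hz.le
  have hkey := normSq_key a z
  have hna : Complex.normSq a < 1 := by
    rw [← Complex.sq_norm]; nlinarith [norm_nonneg a]
  have hnz : Complex.normSq z < 1 := by
    rw [← Complex.sq_norm]; nlinarith [norm_nonneg z]
  have h1 : Complex.normSq (z - a) < Complex.normSq (1 - (starRingEnd ℂ) a * z) := by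
    nlinarith
  have h2 : ‖z - a‖ < ‖1 - (starRingEnd ℂ) a * z‖ := by
    rw [Complex.norm_def, Complex.norm_def]
    exact Real.sqrt_lt_sqrt (Complex.normSq_nonneg _) h1
  rw [norm_div, div_lt_one]
  · exact h2
  · exact lt_of_le_of_lt (norm_nonneg _) h2

lemma factor_eq {a z : ℂ} (ha : ‖a‖ < 1) (hz : ‖z‖ = 1) :
    ‖(z - a) / (1 - (starRingEnd ℂ) a * z)‖ = 1 := by
  have hz' : Complex.normSq z = 1 := by
    rw [← Complex.sq_norm, hz]; norm_num
  have hkey := normSq_key a z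
  rw [hz'] at hkey
  have h1 : Complex.normSq (z - a) = Complex.normSq (1 - (starRingEnd ℂ) a * z) := by
    nlinarith
  have h2 : ‖z - a‖ = ‖1 - (starRingEnd ℂ) a * z‖ := by
    rw [Complex.norm_def, Complex.norm_def, h1]
  have hd := denom_ne ha hz.le
  rw [norm_div, h2, div_self (norm_ne_zero_iff.mpr hd)]

/-- The open annulus `{z : r < |z| < 1}` is connected when `0 ≤ r < 1`. -/
lemma isConnected_annulus {r : ℝ} (hr0 : 0 ≤ r) (hr1 : r < 1) :
    IsConnected {z : ℂ | r < ‖z‖ ∧ ‖z‖ < 1} := by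
  have himg : {z : ℂ | r < ‖z‖ ∧ ‖z‖ < 1}
      = (fun p : ℝ × ℝ => (p.1 : ℂ) * Complex.exp ((p.2 : ℂ) * Complex.I)) ''
        (Set.Ioo r 1 ×ˢ (Set.univ : Set ℝ)) := by
    ext z
    constructor
    · rintro ⟨h1, h2⟩
      exact ⟨(‖z‖, Complex.arg z), ⟨⟨h1, h2⟩, trivial⟩,
        Complex.norm_mul_exp_arg_mul_I z⟩
    · rintro ⟨⟨t, θ⟩, ⟨⟨ht1, ht2⟩, -⟩, rfl⟩
      have habs : ‖(t : ℂ) * Complex.exp ((θ : ℂ) * Complex.I)‖ = t := by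
        rw [norm_mul, Complex.norm_exp_ofReal_mul_I, Complex.norm_real, Real.norm_eq_abs,
          _root_.abs_of_nonneg (le_trans hr0 ht1.le), mul_one]
      exact ⟨by rw [habs]; exact ht1, by rw [habs]; exact ht2⟩
  rw [himg]
  apply IsConnected.image
  · exact (isConnected_Ioo hr1).prod ⟨⟨0, trivial⟩, isPreconnected_univ⟩
  · apply Continuous.continuousOn
    continuity

/-- If all critical values of a finite Blaschke product `f` of degree `n ≥ 2` lie in the
closed disk `{|w| ≤ λ}` with `0 < λ < 1`, then for every `ρ` with `λ < ρ < 1` the set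
`{z : |z| < 1, ρ < |f(z)| < 1}` is connected. -/
theorem blaschke_annulus_preimage_connected (n : ℕ) (hn : 2 ≤ n)
    (α : ℂ) (hα : ‖α‖ = 1)
    (a : Fin n → ℂ) (ha : ∀ k, ‖a k‖ < 1)
    (f : ℂ → ℂ)
    (hf : ∀ z, ‖z‖ < 1 →
      f z = α * ∏ k : Fin n, (z - a k) / (1 - (starRingEnd ℂ) (a k) * z))
    (lam : ℝ) (hlam₀ : 0 < lam) (hlam₁ : lam < 1)
    (hcrit : ∀ ζ : ℂ, ‖ζ‖ < 1 → deriv f ζ = 0 → ‖f ζ‖ ≤ lam)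
    (ρ : ℝ) (hρ₁ : lam < ρ) (hρ₂ : ρ < 1) :
    IsConnected {z : ℂ | ‖z‖ < 1 ∧ ρ < ‖f z‖ ∧ ‖f z‖ < 1} := by
  have hρ0 : 0 < ρ := hlam₀.trans hρ₁
  set B : ℂ → ℂ := fun z => α * ∏ k : Fin n, (z - a k) / (1 - (starRingEnd ℂ) (a k) * z)
    with hBdef
  have k0 : Fin n := ⟨0, lt_of_lt_of_le (by norm_num) hn⟩
  -- |B z| < 1 on the open disk
  have hBlt : ∀ z : ℂ, ‖z‖ < 1 → ‖B z‖ < 1 := by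
    intro z hz
    have habs : ‖B z‖
        = ∏ k : Fin n, ‖(z - a k) / (1 - (starRingEnd ℂ) (a k) * z)‖ := by
      rw [hBdef]; simp only [norm_mul, hα, one_mul, norm_prod]
    rw [habs, ← Finset.mul_prod_erase Finset.univ _ (Finset.mem_univ k0)]
    have h1 : ∏ k ∈ Finset.univ.erase k0,
        ‖(z - a k) / (1 - (starRingEnd ℂ) (a k) * z)‖ ≤ 1 :=
      Finset.prod_le_one (fun i _ => norm_nonneg _)
        (fun i _ => (factor_lt (ha i) hz).le)
    calc ‖(z - a k0) / (1 - (starRingEnd ℂ) (a k0) * z)‖ *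
          ∏ k ∈ Finset.univ.erase k0,
            ‖(z - a k) / (1 - (starRingEnd ℂ) (a k) * z)‖
        ≤ ‖(z - a k0) / (1 - (starRingEnd ℂ) (a k0) * z)‖ * 1 :=
          mul_le_mul_of_nonneg_left h1 (norm_nonneg _)
      _ < 1 := by simpa using factor_lt (ha k0) hz
  -- |B z| = 1 on the circle
  have hBeq1 : ∀ z : ℂ, ‖z‖ = 1 → ‖B z‖ = 1 := by
    intro z hz
    rw [hBdef]
    simp only [norm_mul, hα, one_mul, norm_prod]
    rw [Finset.prod_eq_one (fun k _ => factor_eq (ha k) hz)]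
  -- analytic and continuous data
  have hdenom : ∀ (k : Fin n) (z : ℂ), ‖z‖ ≤ 1 →
      1 - (starRingEnd ℂ) (a k) * z ≠ 0 := fun k z hz => denom_ne (ha k) hz
  have hmemcb : ∀ z : ℂ, z ∈ Metric.closedBall (0:ℂ) 1 ↔ ‖z‖ ≤ 1 := by
    intro z; simp [Metric.mem_closedBall, Complex.dist_eq]
  have hmemb : ∀ z : ℂ, z ∈ Metric.ball (0:ℂ) 1 ↔ ‖z‖ < 1 := by
    intro z; simp [Metric.mem_ball, Complex.dist_eq]
  have hBcont : ContinuousOn B (Metric.closedBall (0:ℂ) 1) := by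
    apply ContinuousOn.mul continuousOn_const
    apply continuousOn_finset_prod
    intro k _
    exact ContinuousOn.div (continuousOn_id.sub continuousOn_const)
      (continuousOn_const.sub (continuousOn_const.mul continuousOn_id))
      (fun z hz => hdenom k z ((hmemcb z).1 hz))
  have hBdiff : DifferentiableOn ℂ B (Metric.ball (0:ℂ) 1) := by
    apply DifferentiableOn.mul (differentiableOn_const _)
    apply DifferentiableOn.fun_finsetProd
    intro k _
    exact DifferentiableOn.div (differentiableOn_id.sub (differentiableOn_const _))
      ((differentiableOn_const _).sub ((differentiableOn_const _).mul differentiableOn_id))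
      (fun z hz => hdenom k z ((hmemb z).1 hz).le)
  -- choose the radius r of a boundary annulus on which |B| > ρ
  have key : ∃ r : ℝ, 0 ≤ r ∧ r < 1 ∧
      ∀ z : ℂ, r < ‖z‖ → ‖z‖ < 1 → ρ < ‖B z‖ := by
    set S := {z ∈ Metric.closedBall (0:ℂ) 1 | ‖B z‖ ≤ ρ} with hSdef
    have hSclosed : IsClosed S := by
      have : S = Metric.closedBall (0:ℂ) 1 ∩
          (fun z => ‖B z‖) ⁻¹' Set.Iic ρ := by
        ext z; simp [hSdef]
      rw [this]
      exact ContinuousOn.preimage_isClosed_of_isClosed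
        (continuous_norm.comp_continuousOn hBcont)
        Metric.isClosed_closedBall isClosed_Iic
    have hScompact : IsCompact S :=
      (isCompact_closedBall (0:ℂ) 1).of_isClosed_subset hSclosed (fun z hz => hz.1)
    rcases S.eq_empty_or_nonempty with hSe | hSne
    · refine ⟨0, le_refl 0, by norm_num, fun z h0 h1 => ?_⟩
      by_contra hc
      push_neg at hc
      have : z ∈ S := ⟨(hmemcb z).2 h1.le, hc⟩
      rw [hSe] at this; exact this
    · obtain ⟨z0, hz0S, hmax⟩ := hScompact.exists_isMaxOn hSne
        (continuous_norm.continuousOn)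
      have hz0lt : ‖z0‖ < 1 := by
        rcases lt_or_eq_of_le ((hmemcb z0).1 hz0S.1) with h | h
        · exact h
        · exfalso
          have := hBeq1 z0 h
          have := hz0S.2
          linarith
      refine ⟨‖z0‖, norm_nonneg z0, hz0lt, fun z h0 h1 => ?_⟩
      by_contra hc
      push_neg at hc
      have hzS : z ∈ S := ⟨(hmemcb z).2 h1.le, hc⟩
      exact absurd (hmax hzS) (not_le.2 h0)
  obtain ⟨r, hr0, hr1, hrB⟩ := key
  set V := {z : ℂ | ‖z‖ < 1 ∧ ρ < ‖f z‖ ∧ ‖f z‖ < 1}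
    with hVdef
  -- V as an open set defined via B
  have hVmem : ∀ z : ℂ, z ∈ V ↔ ‖z‖ < 1 ∧ ρ < ‖B z‖ := by
    intro z
    constructor
    · rintro ⟨h1, h2, -⟩
      rw [hf z h1] at h2
      exact ⟨h1, h2⟩
    · rintro ⟨h1, h2⟩
      refine ⟨h1, ?_, ?_⟩ <;> rw [hf z h1]
      · exact h2
      · exact hBlt z h1
  have hVopen : IsOpen V := by
    have : V = Metric.ball (0:ℂ) 1 ∩ (fun z => ‖B z‖) ⁻¹' Set.Ioi ρ := by
      ext z
      simp only [Set.mem_inter_iff, Set.mem_preimage, Set.mem_Ioi, hmemb z, hVmem z]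
    rw [this]
    exact ContinuousOn.isOpen_inter_preimage
      (continuous_norm.comp_continuousOn
        (hBcont.mono Metric.ball_subset_closedBall))
      Metric.isOpen_ball isOpen_Ioi
  -- the annulus is inside V
  set A := {z : ℂ | r < ‖z‖ ∧ ‖z‖ < 1} with hAdef
  have hAV : A ⊆ V := fun z hz => (hVmem z).2 ⟨hz.2, hrB z hz.1 hz.2⟩
  have hAconn := isConnected_annulus hr0 hr1
  obtain ⟨x₀, hx₀A⟩ := hAconn.nonempty
  -- every connected component of V meets the annulus
  have hmeets : ∀ y ∈ V, ((connectedComponentIn V y) ∩ A).Nonempty := by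
    intro y hy
    by_contra hc
    rw [Set.not_nonempty_iff_eq_empty] at hc
    set W := connectedComponentIn V y with hWdef
    have hWV : W ⊆ V := connectedComponentIn_subset V y
    have hyW : y ∈ W := mem_connectedComponentIn hy
    have hWopen : IsOpen W := hVopen.connectedComponentIn
    have hWsub : W ⊆ Metric.closedBall (0:ℂ) r := by
      intro z hz
      have hz1 : ‖z‖ < 1 := (hWV hz).1
      have : z ∉ A := fun hA' => Set.eq_empty_iff_forall_notMem.1 hc z ⟨hz, hA'⟩
      rw [hAdef] at this
      simp only [Set.mem_setOf_eq, not_and] at this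
      have hzr : ¬ r < ‖z‖ := fun h' => this h' hz1
      simp [Metric.mem_closedBall, Complex.dist_eq]
      linarith [not_lt.1 hzr]
    have hclW : closure W ⊆ Metric.closedBall (0:ℂ) r :=
      closure_minimal hWsub Metric.isClosed_closedBall
    have hclWball : closure W ⊆ Metric.ball (0:ℂ) 1 :=
      hclW.trans (Metric.closedBall_subset_ball hr1)
    -- frontier points are not in V
    have hfrV : ∀ x ∈ frontier W, x ∉ V := by
      intro x hx hxV
      have hx' : x ∈ closure W \ W := by rw [hWopen.frontier_eq] at hx; exact hx
      apply hx'.2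
      have hins : IsPreconnected (insert x W) := by
        apply (isPreconnected_connectedComponentIn).subset_closure
          (Set.subset_insert x W)
        intro w hw
        rcases hw with rfl | hw
        · exact hx'.1
        · exact subset_closure hw
      have := hins.subset_connectedComponentIn (Set.mem_insert_iff.2 (Or.inr hyW))
        (Set.insert_subset_iff.2 ⟨hxV, hWV⟩)
      exact this (Set.mem_insert x W)
    -- maximum modulus principle
    have hbd : ∀ x ∈ frontier W, ‖B x‖ ≤ ρ := by
      intro x hx
      have hxcl : x ∈ closure W := frontier_subset_closure hx
      have hx1 : ‖x‖ < 1 := (hmemb x).1 (hclWball hxcl)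
      have := hfrV x hx
      rw [hVmem x] at this
      push_neg at this
      exact this hx1
    have hdc : DiffContOnCl ℂ B W :=
      ⟨hBdiff.mono (fun z hz => (hmemb z).2 ((hWV hz).1)),
        hBcont.mono (hclWball.trans Metric.ball_subset_closedBall)⟩
    have hbW : Bornology.IsBounded W :=
      Metric.isBounded_closedBall.subset hWsub
    have hle := Complex.norm_le_of_forall_mem_frontier_norm_le hbW hdc hbd
      (subset_closure hyW)
    have : ρ < ‖B y‖ := ((hVmem y).1 hy).2
    linarith
  -- conclude
  refine ⟨⟨x₀, hAV hx₀A⟩, isPreconnected_of_forall x₀ ?_⟩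
  intro y hy
  obtain ⟨p, hpW, hpA⟩ := hmeets y hy
  refine ⟨connectedComponentIn V y ∪ A,
    Set.union_subset (connectedComponentIn_subset V y) hAV,
    Or.inr hx₀A, Or.inl (mem_connectedComponentIn hy), ?_⟩
  exact IsPreconnected.union p hpW hpA isPreconnected_connectedComponentIn
    hAconn.isPreconnected
end
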